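/- For a polynomial f of degree d with integer coefficients, the greatest common divisor of the set {f(n) : n ∈ ℤ} equals gcd(f(0), f(1), ..., f(d)). -/

import Mathlib

/-!
The `(d + 1)`-st forward difference of `n ↦ f n` vanishes, and the `k`-th forward difference at `0`
is an integer combination of `f 0, …, f k`. So `e` divides every forward difference of `f` at `0`,
and since a function on `ℤ` is recovered from its value at `0` and its forward difference, `e`
divides the iterated differences on all of `ℤ`, down to `f` itself.
-/

open Polynomial fwdDiff

section FwdDiff

variable {R : Type*} [CommRing R] {e : R}

theorem dvd_of_dvd_zero_of_dvd_fwdDiff {g : ℤ → R} (h0 : e ∣ g 0)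
    (hΔ : ∀ y, e ∣ Δ_[1] g y) (y : ℤ) : e ∣ g y := by
  induction y using Int.induction_on with
  | zero => exact h0
  | succ i hi => simpa [fwdDiff] using dvd_add hi (hΔ i)
  | pred i hi => simpa [fwdDiff] using dvd_sub hi (hΔ (-i - 1))

theorem dvd_of_dvd_fwdDiff_iter_zero (N : ℕ) {g : ℤ → R}
    (hN : ∀ y, e ∣ (Δ_[1])^[N] g y) (h : ∀ k < N, e ∣ (Δ_[1])^[k] g 0) (y : ℤ) : e ∣ g y := by
  induction N generalizing g y with
  | zero => exact hN y
  | succ N ih =>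
    exact dvd_of_dvd_zero_of_dvd_fwdDiff (h 0 N.succ_pos)
      (ih (g := Δ_[1] g) hN fun k hk => h (k + 1) (by omega)) y

theorem dvd_fwdDiff_iter_zero {g : ℤ → R} (k : ℕ) (h : ∀ j ≤ k, e ∣ g j) :
    e ∣ (Δ_[1])^[k] g 0 := by
  rw [fwdDiff_iter_eq_sum_shift]
  refine Finset.dvd_sum fun j hj => ?_
  rw [zsmul_eq_mul]
  exact dvd_mul_of_dvd_right (by simpa using h j (by simpa [Nat.lt_succ_iff] using hj)) _

end FwdDiff

theorem fixed_divisor_eq_gcd_truncated_image (f : Polynomial ℤ) (d : ℕ)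
    (hd : f.natDegree = d) (e : ℤ) :
    (∀ n : ℤ, e ∣ f.eval n) ↔ (∀ k : ℕ, k ≤ d → e ∣ f.eval (k : ℤ)) := by
  refine ⟨fun h k _ => h k, fun h => ?_⟩
  have hvanish : (Δ_[1])^[d + 1] f.eval = 0 :=
    fwdDiff_iter_eq_zero_of_degree_lt (hd ▸ d.lt_succ_self)
  exact dvd_of_dvd_fwdDiff_iter_zero (d + 1) (fun y => by simp [hvanish])
    fun k hk => dvd_fwdDiff_iter_zero k fun j hj => h j (by omega)
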